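/- Let A_c and B_c be n_c×n_c real symmetric positive semidefinite matrices with A_c ≠ 0. There exist positive numbers c₁ and c₂ such that c₁ v_cᵀ A_c v_c ≤ v_cᵀ B_c v_c ≤ c₂ v_cᵀ A_c v_c for all v_c ∈ ℝ^{n_c} if and only if R(B_c) = R(A_c); moreover, when R(B_c) = R(A_c), these inequalities hold with c₁ = λ_{n_c−s+1}(A_c† B_c) and c₂ = λ_max(A_c† B_c), where s = rank(A_c). -/

import Mathlib

open Matrix

/-- Euclidean norm of a vector in `ℝⁿ`. -/
noncomputable def enorm {n : ℕ} (v : Fin n → ℝ) : ℝ := Real.sqrt (v ⬝ᵥ v)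

/-- The `A`-seminorm `‖v‖_A = sqrt (vᵀ A v)` of a vector. -/
noncomputable def vnorm {n : ℕ} (A : Matrix (Fin n) (Fin n) ℝ) (v : Fin n → ℝ) : ℝ :=
  Real.sqrt (v ⬝ᵥ A.mulVec v)

/-- The `A`-seminorm of a matrix: sup over `v ∉ N(A)` of `‖Xv‖_A / ‖v‖_A`. -/
noncomputable def matNorm {n : ℕ} (A X : Matrix (Fin n) (Fin n) ℝ) : ℝ :=
  sSup ((fun v => vnorm A (X.mulVec v) / vnorm A v) '' {v | A.mulVec v ≠ 0})

/-- Penrose conditions: `X` is the Moore–Penrose inverse of `S`. -/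
def IsMP {m : ℕ} (S X : Matrix (Fin m) (Fin m) ℝ) : Prop :=
  S * X * S = S ∧ X * S * X = X ∧ (S * X)ᵀ = S * X ∧ (X * S)ᵀ = X * S

/-- `eigk S k` is the `k`-th smallest eigenvalue (1-indexed, counted with
multiplicity) of a symmetric matrix `S` (junk value otherwise). -/
noncomputable def eigk {m : ℕ} (S : Matrix (Fin m) (Fin m) ℝ) (k : ℕ) : ℝ :=
  if hS : S.IsHermitian then
    if h : k - 1 < m then hS.eigenvalues (Tuple.sort hS.eigenvalues ⟨k - 1, h⟩) else 0
  else 0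

/-- The positive semidefinite square root of a positive semidefinite matrix
(as `Matrix.PosSemidef.sqrt` was defined in Mathlib of December 2024). -/
noncomputable def Matrix.PosSemidef.sqrt {n : Type*} [Fintype n] [DecidableEq n]
    {A : Matrix n n ℝ} (hA : A.PosSemidef) : Matrix n n ℝ :=
  hA.1.eigenvectorUnitary.1 * diagonal ((↑) ∘ (Real.sqrt ·) ∘ hA.1.eigenvalues) *
  (star hA.1.eigenvectorUnitary : Matrix n n ℝ)

/-!
Two-sided bounds between positive semidefinite forms force `N(A_c) = N(B_c)`, and for symmetric
matrices this is the same as `R(A_c) = R(B_c)`, the range being the orthogonal complement of the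
kernel.

Conversely, put `S = (A_c†)^{1/2}` and `M = S B_c S`. When `R(B_c) ⊆ R(A_c)` we have
`A_c A_c† B_c = B_c`, so the substitution `w = S A_c v` turns `vᵀ A_c v` into `wᵀ w` and
`vᵀ B_c v` into `wᵀ M w`; when also `R(A_c) ⊆ R(B_c)`, `w` is orthogonal to `N(M)`. Sandwiching
`B_c` between `A_c S` and `S A_c` shows `rank M = s`, so `λ_{n_c-s+1}(M)` is the smallest
nonzero eigenvalue of `M`, and expanding `w` in an orthonormal eigenbasis of `M` gives
`λ_{n_c-s+1}(M) wᵀw ≤ wᵀ M w ≤ λ_max(M) wᵀw`.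
-/

open WithLp Finset

theorem Matrix.mulVec_dotProduct_mulVec {m n : Type*} [Fintype m] [Fintype n]
    (X : Matrix m n ℝ) (Y : Matrix m m ℝ) (v : n → ℝ) :
    X *ᵥ v ⬝ᵥ Y *ᵥ X *ᵥ v = v ⬝ᵥ (Xᵀ * Y * X) *ᵥ v := by
  rw [← mulVec_mulVec, ← mulVec_mulVec, dotProduct_transpose_mulVec, dotProduct_comm]

theorem setOf_eq_mulVec_eq_iff {n : Type*} [Fintype n] (X Y : Matrix n n ℝ) :
    {v : n → ℝ | ∃ w, v = X *ᵥ w} = {v | ∃ w, v = Y *ᵥ w} ↔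
      LinearMap.range X.mulVecLin = LinearMap.range Y.mulVecLin := by
  have hset : ∀ Z : Matrix n n ℝ,
      {v : n → ℝ | ∃ w, v = Z *ᵥ w} = (LinearMap.range Z.mulVecLin : Set (n → ℝ)) :=
    fun Z => by ext v; simp [eq_comm]
  rw [hset, hset, SetLike.coe_set_eq]

namespace Matrix.PosSemidef

variable {n : Type*} {A B : Matrix n n ℝ}

theorem transpose_eq (hA : A.PosSemidef) : Aᵀ = A := (isHermitian_iff_isSymm.mp hA.1).eq

variable [Fintype n]

theorem ker_mulVecLin_eq_of_bounds (hA : A.PosSemidef) (hB : B.PosSemidef) {c₁ c₂ : ℝ}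
    (hc₁ : 0 < c₁)
    (h : ∀ v, c₁ * (v ⬝ᵥ A *ᵥ v) ≤ v ⬝ᵥ B *ᵥ v ∧ v ⬝ᵥ B *ᵥ v ≤ c₂ * (v ⬝ᵥ A *ᵥ v)) :
    LinearMap.ker A.mulVecLin = LinearMap.ker B.mulVecLin := by
  ext v
  simp only [LinearMap.mem_ker, mulVecLin_apply, ← hA.dotProduct_mulVec_zero_iff,
    ← hB.dotProduct_mulVec_zero_iff, star_trivial]
  have hA0 := hA.dotProduct_mulVec_nonneg v
  have hB0 := hB.dotProduct_mulVec_nonneg v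
  simp only [star_trivial] at hA0 hB0
  obtain ⟨h₁, h₂⟩ := h v
  constructor
  · intro hv
    rw [hv, mul_zero] at h₂
    exact le_antisymm h₂ hB0
  · intro hv
    rw [hv] at h₁
    exact le_antisymm (nonpos_of_mul_nonpos_right h₁ hc₁) hA0

variable [DecidableEq n]

theorem posSemidef_sqrt (hA : A.PosSemidef) : hA.sqrt.PosSemidef := by
  unfold sqrt
  have hd : (diagonal ((↑) ∘ (Real.sqrt ·) ∘ hA.1.eigenvalues : n → ℝ)).PosSemidef :=
    posSemidef_diagonal_iff.mpr fun i => by simp [Real.sqrt_nonneg]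
  simpa [star_eq_conjTranspose] using
    hd.mul_mul_conjTranspose_same (hA.1.eigenvectorUnitary : Matrix n n ℝ)

theorem sqrt_mul_self (hA : A.PosSemidef) : hA.sqrt * hA.sqrt = A := by
  set U : Matrix n n ℝ := (hA.1.eigenvectorUnitary : Matrix n n ℝ)
  conv_rhs => rw [hA.1.spectral_theorem, Unitary.conjStarAlgAut_apply]
  simp only [sqrt, ← mul_assoc]
  rw [mul_assoc _ (star U) U, Unitary.coe_star_mul_self, mul_one, mul_assoc U,
    diagonal_mul_diagonal]
  congr 3
  funext i
  simp [Real.mul_self_sqrt (hA.eigenvalues_nonneg i)]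

theorem sqrt_mul_mul_sqrt (hB : B.PosSemidef) (hA : A.PosSemidef) :
    (hA.sqrt * B * hA.sqrt).PosSemidef := by
  simpa only [hA.posSemidef_sqrt.1.eq] using hB.mul_mul_conjTranspose_same hA.sqrt

end Matrix.PosSemidef

namespace Matrix

variable {n : Type*} [Fintype n] [DecidableEq n]

theorem range_toEuclideanLin (X : Matrix n n ℝ) :
    LinearMap.range (toEuclideanLin X) =
      (LinearMap.range X.mulVecLin).comap (WithLp.linearEquiv 2 ℝ (n → ℝ)).toLinearMap := by
  ext v
  constructor
  · rintro ⟨u, rfl⟩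
    exact ⟨ofLp u, rfl⟩
  · rintro ⟨u, hu⟩
    exact ⟨toLp 2 u, congrArg (toLp 2) hu⟩

theorem ker_toEuclideanLin (X : Matrix n n ℝ) :
    LinearMap.ker (toEuclideanLin X) =
      (LinearMap.ker X.mulVecLin).comap (WithLp.linearEquiv 2 ℝ (n → ℝ)).toLinearMap := by
  ext v
  simp [toLpLin_apply]

namespace IsHermitian

theorem range_mulVecLin_le_iff {X Y : Matrix n n ℝ} (hX : X.IsHermitian) (hY : Y.IsHermitian) :
    LinearMap.range X.mulVecLin ≤ LinearMap.range Y.mulVecLin ↔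
      LinearMap.ker Y.mulVecLin ≤ LinearMap.ker X.mulVecLin := by
  have hrange : ∀ {Z : Matrix n n ℝ}, Z.IsHermitian →
      LinearMap.range (toEuclideanLin Z) = (LinearMap.ker (toEuclideanLin Z))ᗮ := fun hZ => by
    rw [← (isSymmetric_toEuclideanLin_iff.mpr hZ).orthogonal_range, Submodule.orthogonal_orthogonal]
  rw [← Submodule.comap_le_comap_iff_of_surjective (WithLp.linearEquiv 2 ℝ (n → ℝ)).surjective,
    ← Submodule.comap_le_comap_iff_of_surjective (WithLp.linearEquiv 2 ℝ (n → ℝ)).surjective,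
    ← range_toEuclideanLin, ← range_toEuclideanLin, ← ker_toEuclideanLin, ← ker_toEuclideanLin,
    hrange hX, hrange hY, Submodule.orthogonal_le_orthogonal_iff]

theorem range_mulVecLin_eq_iff {X Y : Matrix n n ℝ} (hX : X.IsHermitian) (hY : Y.IsHermitian) :
    LinearMap.range X.mulVecLin = LinearMap.range Y.mulVecLin ↔
      LinearMap.ker X.mulVecLin = LinearMap.ker Y.mulVecLin := by
  rw [le_antisymm_iff, le_antisymm_iff, hX.range_mulVecLin_le_iff hY,
    hY.range_mulVecLin_le_iff hX, and_comm]

theorem rank_pos {X : Matrix n n ℝ} (hX : X.IsHermitian) (h : X ≠ 0) : 0 < X.rank := by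
  rw [hX.rank_eq_card_non_zero_eigs, Fintype.card_pos_iff]
  obtain ⟨i, hi⟩ := Function.ne_iff.mp (hX.eigenvalues_eq_zero_iff.not.mpr h)
  exact ⟨⟨i, hi⟩⟩

variable {M : Matrix n n ℝ} (hM : M.IsHermitian)

theorem dotProduct_mulVec_eq_sum (w : n → ℝ) :
    w ⬝ᵥ M *ᵥ w = ∑ i, hM.eigenvalues i * (w ⬝ᵥ hM.eigenvectorBasis i) ^ 2 := by
  have hMt : Mᵀ = M := (isHermitian_iff_isSymm.mp hM).eq
  have := hM.eigenvectorBasis.sum_inner_mul_inner (toLp 2 (M *ᵥ w)) (toLp 2 w)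
  simp only [EuclideanSpace.inner_eq_star_dotProduct, star_trivial] at this
  rw [← this]
  refine Finset.sum_congr rfl fun i _ => ?_
  rw [← dotProduct_transpose_mulVec, hMt, hM.mulVec_eigenvectorBasis, dotProduct_smul,
    smul_eq_mul, dotProduct_comm w]
  ring

theorem dotProduct_self_eq_sum (w : n → ℝ) :
    w ⬝ᵥ w = ∑ i, (w ⬝ᵥ hM.eigenvectorBasis i) ^ 2 := by
  have := hM.eigenvectorBasis.sum_inner_mul_inner (toLp 2 w) (toLp 2 w)
  simp only [EuclideanSpace.inner_eq_star_dotProduct, star_trivial] at this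
  rw [← this]
  refine Finset.sum_congr rfl fun i _ => ?_
  rw [dotProduct_comm w]
  ring

theorem dotProduct_mulVec_le {c : ℝ} (hc : ∀ i, hM.eigenvalues i ≤ c) (w : n → ℝ) :
    w ⬝ᵥ M *ᵥ w ≤ c * (w ⬝ᵥ w) := by
  rw [hM.dotProduct_mulVec_eq_sum, hM.dotProduct_self_eq_sum, Finset.mul_sum]
  gcongr with i
  exact hc i

theorem le_dotProduct_mulVec {c : ℝ} (hc : ∀ i, hM.eigenvalues i ≠ 0 → c ≤ hM.eigenvalues i)
    {w : n → ℝ} (hw : ∀ u, M *ᵥ u = 0 → w ⬝ᵥ u = 0) : c * (w ⬝ᵥ w) ≤ w ⬝ᵥ M *ᵥ w := by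
  rw [hM.dotProduct_mulVec_eq_sum, hM.dotProduct_self_eq_sum, Finset.mul_sum]
  refine Finset.sum_le_sum fun i _ => ?_
  by_cases hi : hM.eigenvalues i = 0
  · have hwi : w ⬝ᵥ hM.eigenvectorBasis i = 0 :=
      hw _ (by rw [hM.mulVec_eigenvectorBasis, hi, zero_smul])
    simp [hwi]
  · exact mul_le_mul_of_nonneg_right (hc i hi) (sq_nonneg _)

end IsHermitian

end Matrix

theorem Monotone.le_iff_lt_card_filter_le {m : ℕ} {α : Type*} [LinearOrder α] {g : Fin m → α}
    (hg : Monotone g) (a : α) (j : Fin m) : g j ≤ a ↔ (j : ℕ) < #{i | g i ≤ a} := by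
  constructor
  · intro hj
    have hsub : Iic j ⊆ ({i | g i ≤ a} : Finset (Fin m)) := fun i hi =>
      mem_filter.mpr ⟨mem_univ _, (hg (mem_Iic.mp hi)).trans hj⟩
    have := card_le_card hsub
    rw [Fin.card_Iic] at this
    omega
  · intro hj
    by_contra h
    have hsub : ({i | g i ≤ a} : Finset (Fin m)) ⊆ Iio j := fun i hi =>
      mem_Iio.mpr (lt_of_not_ge fun hji => h ((hg hji).trans (mem_filter.mp hi).2))
    have := card_le_card hsub
    rw [Fin.card_Iio] at this
    omega

section eigk

variable {m : ℕ} {M : Matrix (Fin m) (Fin m) ℝ}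

theorem eigk_eq (hM : M.IsHermitian) {k : ℕ} (hk : k - 1 < m) :
    eigk M k = hM.eigenvalues (Tuple.sort hM.eigenvalues ⟨k - 1, hk⟩) := by
  rw [eigk, dif_pos hM, dif_pos hk]

theorem Matrix.IsHermitian.eigenvalues_le_eigk (hM : M.IsHermitian) (i : Fin m) :
    hM.eigenvalues i ≤ eigk M m := by
  set σ := Tuple.sort hM.eigenvalues
  have hlast : m - 1 < m := Nat.sub_one_lt_of_lt i.2
  have hle : σ.symm i ≤ ⟨m - 1, hlast⟩ := Fin.le_def.mpr (Nat.le_sub_one_of_lt (σ.symm i).2)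
  rw [eigk_eq hM hlast]
  conv_lhs => rw [← σ.apply_symm_apply i]
  exact Tuple.monotone_sort hM.eigenvalues hle

namespace Matrix.PosSemidef

theorem card_sort_eigenvalues_nonpos (hM : M.PosSemidef) :
    #{j | (hM.1.eigenvalues ∘ Tuple.sort hM.1.eigenvalues) j ≤ 0} = m - M.rank := by
  have hzero : #{j | (hM.1.eigenvalues ∘ Tuple.sort hM.1.eigenvalues) j ≤ 0} =
      #{i | ¬hM.1.eigenvalues i ≠ 0} :=
    card_equiv (Tuple.sort hM.1.eigenvalues) fun j => by
      simp only [mem_filter, mem_univ, true_and, not_not, Function.comp_apply]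
      exact (hM.eigenvalues_nonneg _).ge_iff_eq'
  have hsplit := card_filter_add_card_filter_not (s := univ) (fun i => hM.1.eigenvalues i ≠ 0)
  rw [hzero, hM.1.rank_eq_card_non_zero_eigs, Fintype.card_subtype]
  simp only [card_univ, Fintype.card_fin] at hsplit
  omega

theorem eigk_sub_rank_add_one_pos (hM : M.PosSemidef) (hr : 0 < M.rank) :
    0 < eigk M (m - M.rank + 1) := by
  have hlt : m - M.rank + 1 - 1 < m := by have := M.rank_le_width; omega
  have hcount := (Tuple.monotone_sort hM.1.eigenvalues).le_iff_lt_card_filter_le 0 ⟨_, hlt⟩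
  rw [hM.card_sort_eigenvalues_nonpos, Function.comp_apply] at hcount
  rw [eigk_eq hM.1 hlt]
  exact lt_of_not_ge fun h => by simpa using hcount.mp h

theorem eigk_sub_rank_add_one_le (hM : M.PosSemidef) {i : Fin m} (hi : hM.1.eigenvalues i ≠ 0) :
    eigk M (m - M.rank + 1) ≤ hM.1.eigenvalues i := by
  set σ := Tuple.sort hM.1.eigenvalues
  have hmono := Tuple.monotone_sort hM.1.eigenvalues
  have hcount := hmono.le_iff_lt_card_filter_le 0 (σ.symm i)
  rw [hM.card_sort_eigenvalues_nonpos, Function.comp_apply, σ.apply_symm_apply] at hcount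
  have hge : m - M.rank ≤ σ.symm i := by
    by_contra h
    exact hi (le_antisymm (hcount.mpr (by omega)) (hM.eigenvalues_nonneg i))
  have hlt : m - M.rank + 1 - 1 < m := by omega
  rw [eigk_eq hM.1 hlt]
  conv_rhs => rw [← σ.apply_symm_apply i]
  exact hmono (Fin.le_def.mpr (by simpa using hge))

theorem eigk_self_pos (hM : M.PosSemidef) (hr : 0 < M.rank) : 0 < eigk M m := by
  obtain ⟨i, hi⟩ := Fintype.card_pos_iff.mp (hM.1.rank_eq_card_non_zero_eigs ▸ hr)
  calc 0 < eigk M (m - M.rank + 1) := hM.eigk_sub_rank_add_one_pos hr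
    _ ≤ hM.1.eigenvalues i := hM.eigk_sub_rank_add_one_le hi
    _ ≤ eigk M m := hM.1.eigenvalues_le_eigk i

end Matrix.PosSemidef

end eigk

namespace IsMP

variable {m : ℕ} {A B D : Matrix (Fin m) (Fin m) ℝ}

theorem mul_mul_eq_of_range_le (hD : IsMP A D)
    (h : LinearMap.range B.mulVecLin ≤ LinearMap.range A.mulVecLin) : A * D * B = B := by
  refine Matrix.toLin'.injective (LinearMap.ext fun v => ?_)
  obtain ⟨x, hx⟩ := h ⟨v, rfl⟩
  simp only [toLin'_apply, mulVecLin_apply] at hx ⊢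
  rw [← mulVec_mulVec, ← hx, mulVec_mulVec, hD.1]

theorem mul_sqrt_mul_sqrt_mul (hD : IsMP A D) (hDP : D.PosSemidef) :
    A * hDP.sqrt * (hDP.sqrt * A) = A := by
  rw [mul_assoc, ← mul_assoc hDP.sqrt, hDP.sqrt_mul_self, ← mul_assoc, hD.1]

theorem mul_sqrt_mul_conj_mul (hA : A.PosSemidef) (hB : B.PosSemidef) (hD : IsMP A D)
    (hDP : D.PosSemidef) (h : LinearMap.range B.mulVecLin ≤ LinearMap.range A.mulVecLin) :
    A * hDP.sqrt * (hDP.sqrt * B * hDP.sqrt) * (hDP.sqrt * A) = B := by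
  have hADB : A * D * B = B := hD.mul_mul_eq_of_range_le h
  have hBDA : B * D * A = B := by
    simpa only [transpose_mul, hA.transpose_eq, hB.transpose_eq, hDP.transpose_eq, mul_assoc]
      using congrArg transpose hADB
  calc A * hDP.sqrt * (hDP.sqrt * B * hDP.sqrt) * (hDP.sqrt * A)
      = A * (hDP.sqrt * hDP.sqrt) * B * (hDP.sqrt * hDP.sqrt) * A := by simp only [mul_assoc]
    _ = B := by rw [hDP.sqrt_mul_self, hADB, hBDA]

theorem rank_sqrt_mul_mul_sqrt (hA : A.PosSemidef) (hB : B.PosSemidef) (hD : IsMP A D)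
    (hDP : D.PosSemidef) (h : LinearMap.range B.mulVecLin = LinearMap.range A.mulVecLin) :
    (hDP.sqrt * B * hDP.sqrt).rank = A.rank := by
  have hBA : B.rank = A.rank := by rw [Matrix.rank, Matrix.rank, h]
  apply le_antisymm
  · calc (hDP.sqrt * B * hDP.sqrt).rank ≤ (hDP.sqrt * B).rank := rank_mul_le_left _ _
      _ ≤ B.rank := rank_mul_le_right _ _
      _ = A.rank := hBA
  · calc A.rank = (A * hDP.sqrt * (hDP.sqrt * B * hDP.sqrt) * (hDP.sqrt * A)).rank := by
          rw [hD.mul_sqrt_mul_conj_mul hA hB hDP h.le, hBA]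
      _ ≤ (A * hDP.sqrt * (hDP.sqrt * B * hDP.sqrt)).rank := rank_mul_le_left _ _
      _ ≤ (hDP.sqrt * B * hDP.sqrt).rank := rank_mul_le_right _ _

theorem eigk_mul_le_dotProduct_mulVec_le_eigk_mul (hA : A.PosSemidef) (hB : B.PosSemidef)
    (hD : IsMP A D) (hDP : D.PosSemidef) (h : LinearMap.range B.mulVecLin = LinearMap.range A.mulVecLin)
    (v : Fin m → ℝ) :
    eigk (hDP.sqrt * B * hDP.sqrt) (m - A.rank + 1) * (v ⬝ᵥ A *ᵥ v) ≤ v ⬝ᵥ B *ᵥ v ∧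
      v ⬝ᵥ B *ᵥ v ≤ eigk (hDP.sqrt * B * hDP.sqrt) m * (v ⬝ᵥ A *ᵥ v) := by
  set S := hDP.sqrt
  set M := S * B * S
  have hM : M.PosSemidef := hB.sqrt_mul_mul_sqrt hDP
  have hSA : (S * A)ᵀ = A * S := by
    rw [transpose_mul, hA.transpose_eq, hDP.posSemidef_sqrt.transpose_eq]
  set w := (S * A) *ᵥ v
  have hwA : w ⬝ᵥ w = v ⬝ᵥ A *ᵥ v := by
    have := mulVec_dotProduct_mulVec (S * A) 1 v
    rwa [one_mulVec, hSA, mul_one, hD.mul_sqrt_mul_sqrt_mul hDP] at this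
  have hwB : w ⬝ᵥ M *ᵥ w = v ⬝ᵥ B *ᵥ v := by
    rw [mulVec_dotProduct_mulVec, hSA, hD.mul_sqrt_mul_conj_mul hA hB hDP h.le]
  have hw : ∀ u, M *ᵥ u = 0 → w ⬝ᵥ u = 0 := by
    intro u hu
    have hBSu : B *ᵥ S *ᵥ u = 0 := by
      rw [← hB.dotProduct_mulVec_zero_iff, star_trivial, mulVec_dotProduct_mulVec,
        hDP.posSemidef_sqrt.transpose_eq, hu, dotProduct_zero]
    have hASu : A *ᵥ S *ᵥ u = 0 := ((hA.1.range_mulVecLin_le_iff hB.1).mp h.ge) hBSu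
    rw [dotProduct_comm, ← dotProduct_transpose_mulVec, hSA, ← mulVec_mulVec, hASu,
      dotProduct_zero]
  have hrank : M.rank = A.rank := hD.rank_sqrt_mul_mul_sqrt hA hB hDP h
  constructor
  · calc eigk M (m - A.rank + 1) * (v ⬝ᵥ A *ᵥ v) = eigk M (m - M.rank + 1) * (w ⬝ᵥ w) := by
          rw [hrank, hwA]
      _ ≤ w ⬝ᵥ M *ᵥ w := hM.1.le_dotProduct_mulVec (fun _ hi => hM.eigk_sub_rank_add_one_le hi) hw
      _ = v ⬝ᵥ B *ᵥ v := hwB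
  · calc v ⬝ᵥ B *ᵥ v = w ⬝ᵥ M *ᵥ w := hwB.symm
      _ ≤ eigk M m * (w ⬝ᵥ w) := hM.1.dotProduct_mulVec_le hM.1.eigenvalues_le_eigk w
      _ = eigk M m * (v ⬝ᵥ A *ᵥ v) := by rw [hwA]

end IsMP

theorem stmt13 {nc : ℕ} (Ac Bc : Matrix (Fin nc) (Fin nc) ℝ)
    (hAc : Ac.PosSemidef) (hBc : Bc.PosSemidef) (hAc0 : Ac ≠ 0)
    (Acd : Matrix (Fin nc) (Fin nc) ℝ) (hAcd : IsMP Ac Acd)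
    (hAcdP : Acd.PosSemidef) :
    ((∃ c₁ c₂ : ℝ, 0 < c₁ ∧ 0 < c₂ ∧ ∀ v : Fin nc → ℝ,
        c₁ * (v ⬝ᵥ Ac.mulVec v) ≤ v ⬝ᵥ Bc.mulVec v ∧
        v ⬝ᵥ Bc.mulVec v ≤ c₂ * (v ⬝ᵥ Ac.mulVec v)) ↔
      {v : Fin nc → ℝ | ∃ w, v = Bc.mulVec w} = {v : Fin nc → ℝ | ∃ w, v = Ac.mulVec w}) ∧
    ({v : Fin nc → ℝ | ∃ w, v = Bc.mulVec w} = {v : Fin nc → ℝ | ∃ w, v = Ac.mulVec w} →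
      ∀ v : Fin nc → ℝ,
        eigk (hAcdP.sqrt * Bc * hAcdP.sqrt) (nc - Ac.rank + 1) * (v ⬝ᵥ Ac.mulVec v) ≤
            v ⬝ᵥ Bc.mulVec v ∧
          v ⬝ᵥ Bc.mulVec v ≤
            eigk (hAcdP.sqrt * Bc * hAcdP.sqrt) nc * (v ⬝ᵥ Ac.mulVec v)) := by
  simp only [setOf_eq_mulVec_eq_iff]
  have hbounds := hAcd.eigk_mul_le_dotProduct_mulVec_le_eigk_mul hAc hBc hAcdP
  refine ⟨⟨fun ⟨c₁, c₂, hc₁, _, hc⟩ => ?_, fun h => ?_⟩, hbounds⟩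
  · exact (hBc.1.range_mulVecLin_eq_iff hAc.1).mpr (hAc.ker_mulVecLin_eq_of_bounds hBc hc₁ hc).symm
  · have hM := hBc.sqrt_mul_mul_sqrt hAcdP
    have hrank := hAcd.rank_sqrt_mul_mul_sqrt hAc hBc hAcdP h
    have hr : 0 < (hAcdP.sqrt * Bc * hAcdP.sqrt).rank := hrank ▸ hAc.1.rank_pos hAc0
    exact ⟨_, _, hrank ▸ hM.eigk_sub_rank_add_one_pos hr, hM.eigk_self_pos hr, hbounds h⟩
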